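/- For a bivariate Gaussian vector (Z_1, Z_2) with correlation ρ, Kendall's tau satisfies ρ_τ = (2/π) arcsin(ρ); equivalently, ρ = sin(π ρ_τ / 2). -/

import Mathlib

/-!
With `U = W₀ - W₂` and `V = W₁ - W₃`, which are independent `N(0, 2)`, the integrand is
`sign (U * (ρ U + √(1 - ρ²) V))`. This is invariant under scaling `(U, V)`, so in polar
coordinates `(U, V) = (r cos θ, r sin θ)` it equals `sign (cos θ * sin (θ + arcsin ρ))`, and since
the angle of an isotropic Gaussian is uniform, the expectation is `(2π)⁻¹` times the integral of
this over a period, which is `4 arcsin ρ`.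
-/

open MeasureTheory ProbabilityTheory Real intervalIntegral
open scoped NNReal ENNReal

namespace Real

lemma measurable_sign : Measurable Real.sign :=
  Measurable.ite measurableSet_Iio measurable_const
    (Measurable.ite measurableSet_Ioi measurable_const measurable_const)

lemma abs_sign_le_one (x : ℝ) : |Real.sign x| ≤ 1 := by
  rcases Real.sign_apply_eq x with h | h | h <;> simp [h]

lemma sign_mul_of_pos {c : ℝ} (hc : 0 < c) (x : ℝ) : Real.sign (c * x) = Real.sign x := by
  rcases lt_trichotomy x 0 with h | rfl | h
  · rw [sign_of_neg h, sign_of_neg (mul_neg_of_pos_of_neg hc h)]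
  · simp
  · rw [sign_of_pos h, sign_of_pos (mul_pos hc h)]

end Real

lemma intervalIntegrable_sign_comp {f : ℝ → ℝ} (hf : Measurable f) (a b : ℝ) :
    IntervalIntegrable (fun x => Real.sign (f x)) volume a b :=
  intervalIntegrable_const (c := (1 : ℝ)) |>.mono_fun
    (Real.measurable_sign.comp hf).aestronglyMeasurable
    (Filter.Eventually.of_forall fun x => by simpa using Real.abs_sign_le_one (f x))

lemma intervalIntegral.integral_eq_sub_mul_of_forall_mem_Ioo {f : ℝ → ℝ} {a b c : ℝ}
    (hab : a ≤ b) (h : ∀ x ∈ Set.Ioo a b, f x = c) : ∫ x in a..b, f x = (b - a) * c := by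
  rw [integral_of_le hab, integral_Ioc_eq_integral_Ioo, setIntegral_congr_fun measurableSet_Ioo h,
    setIntegral_const, volume_real_Ioo_of_le hab, smul_eq_mul]

lemma integral_sign_cos_mul_sin_add {α : ℝ} (h₀ : -(π / 2) ≤ α) (h₁ : α ≤ π / 2) :
    ∫ θ in -π..π, Real.sign (cos θ * sin (θ + α)) = 4 * α := by
  set f : ℝ → ℝ := fun θ => Real.sign (cos θ * sin (θ + α))
  have hπ := pi_pos
  have hf : ∀ a b, IntervalIntegrable f volume a b :=
    intervalIntegrable_sign_comp (by fun_prop)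
  have hper : Function.Periodic f π := fun θ => by
    simp only [f, cos_add_pi, add_right_comm θ π α, sin_add_pi, neg_mul_neg]
  -- On `(-π/2, π/2)`, `f` is the sign of `sin (θ + α)`, which changes only at `-α`.
  have half : ∀ t, ∫ θ in t..t + π, f θ = 2 * α := fun t => by
    have hneg : ∀ θ ∈ Set.Ioo (-(π / 2)) (-α), f θ = -1 := fun θ ⟨hθ₁, hθ₂⟩ =>
      sign_of_neg (mul_neg_of_pos_of_neg (cos_pos_of_mem_Ioo ⟨hθ₁, by linarith⟩)
        (sin_neg_of_neg_of_neg_pi_lt (by linarith) (by linarith)))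
    have hpos : ∀ θ ∈ Set.Ioo (-α) (-(π / 2) + π), f θ = 1 := fun θ ⟨hθ₁, hθ₂⟩ =>
      sign_of_pos (mul_pos (cos_pos_of_mem_Ioo ⟨by linarith, by linarith⟩)
        (sin_pos_of_pos_of_lt_pi (by linarith) (by linarith)))
    rw [hper.intervalIntegral_add_eq t (-(π / 2)),
      ← integral_add_adjacent_intervals (hf _ (-α)) (hf _ _),
      integral_eq_sub_mul_of_forall_mem_Ioo (neg_le_neg h₁) hneg,
      integral_eq_sub_mul_of_forall_mem_Ioo (by linarith) hpos]
    ring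
  calc ∫ θ in -π..π, f θ = (∫ θ in -π..-π + π, f θ) + ∫ θ in 0..0 + π, f θ := by
        simp only [neg_add_cancel, zero_add]
        exact (integral_add_adjacent_intervals (hf _ _) (hf _ _)).symm
    _ = 4 * α := by rw [half, half]; ring

lemma gaussianPDFReal_zero_mul_gaussianPDFReal_zero (v : ℝ≥0) (x y : ℝ) :
    gaussianPDFReal 0 v x * gaussianPDFReal 0 v y
      = (2 * π * v)⁻¹ * exp (-(x ^ 2 + y ^ 2) / (2 * v)) := by
  rw [gaussianPDFReal, gaussianPDFReal, mul_mul_mul_comm, ← exp_add, ← mul_inv,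
    mul_self_sqrt (by positivity)]
  congr 2
  ring

lemma integral_Ioi_mul_exp_neg_sq_div {v : ℝ} (hv : 0 < v) :
    ∫ r in Set.Ioi (0 : ℝ), r * exp (-r ^ 2 / (2 * v)) = v := by
  have h := integral_rpow_mul_exp_neg_mul_rpow (p := 2) (q := 1) two_pos (by norm_num)
    (inv_pos.mpr (mul_pos two_pos hv))
  norm_num [Gamma_one, rpow_neg_one] at h
  convert h using 1
  · refine setIntegral_congr_fun measurableSet_Ioi fun r _ => ?_
    congr 2
    ring
  · ring

theorem integral_gaussianReal_prod_of_forall_polar {v : ℝ≥0} (hv : v ≠ 0) {f : ℝ × ℝ → ℝ}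
    {g : ℝ → ℝ} (hfg : ∀ r > 0, ∀ θ, f (r * cos θ, r * sin θ) = g θ) :
    ∫ p, f p ∂(gaussianReal 0 v).prod (gaussianReal 0 v) = (2 * π)⁻¹ * ∫ θ in -π..π, g θ := by
  have hv' : (0 : ℝ) < v := by positivity
  have hpolar : Set.EqOn
      (fun p : ℝ × ℝ => p.1 • (gaussianPDFReal 0 v (polarCoord.symm p).1
        * gaussianPDFReal 0 v (polarCoord.symm p).2 * f (polarCoord.symm p)))
      (fun p => (2 * π * v)⁻¹ * (p.1 * exp (-p.1 ^ 2 / (2 * v))) * g p.2) polarCoord.target := by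
    rintro ⟨r, θ⟩ ⟨hr, -⟩
    simp only [polarCoord_symm_apply, gaussianPDFReal_zero_mul_gaussianPDFReal_zero,
      hfg r hr θ, smul_eq_mul]
    rw [show (r * cos θ) ^ 2 + (r * sin θ) ^ 2 = r ^ 2 by
      linear_combination r ^ 2 * sin_sq_add_cos_sq θ]
    ring
  rw [gaussianReal_of_var_ne_zero 0 hv, prod_withDensity (measurable_gaussianPDF 0 v)
    (measurable_gaussianPDF 0 v), ← Measure.volume_eq_prod,
    integral_withDensity_eq_integral_toReal_smul (by fun_prop)
      (ae_of_all _ fun _ => ENNReal.mul_lt_top (by simp [gaussianPDF]) (by simp [gaussianPDF]))]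
  simp only [ENNReal.toReal_mul, toReal_gaussianPDF, smul_eq_mul]
  rw [← integral_comp_polarCoord_symm,
    setIntegral_congr_fun polarCoord.open_target.measurableSet hpolar, polarCoord_target,
    Measure.volume_eq_prod,
    setIntegral_prod_mul (fun r => (2 * π * v)⁻¹ * (r * exp (-r ^ 2 / (2 * v)))) g,
    MeasureTheory.integral_const_mul, integral_Ioi_mul_exp_neg_sq_div hv',
    integral_of_le (by linarith [pi_pos]), integral_Ioc_eq_integral_Ioo]
  field_simp

theorem integral_sign_mul_gaussianReal_prod {v : ℝ≥0} (hv : v ≠ 0) {ρ : ℝ}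
    (hρ : ρ ∈ Set.Icc (-1 : ℝ) 1) :
    ∫ p, Real.sign (p.1 * (ρ * p.1 + √(1 - ρ ^ 2) * p.2))
        ∂(gaussianReal 0 v).prod (gaussianReal 0 v) = 2 / π * arcsin ρ := by
  have hpolar : ∀ r > 0, ∀ θ,
      Real.sign (r * cos θ * (ρ * (r * cos θ) + √(1 - ρ ^ 2) * (r * sin θ)))
        = Real.sign (cos θ * sin (θ + arcsin ρ)) := fun r hr θ => by
    have h : r * cos θ * (ρ * (r * cos θ) + √(1 - ρ ^ 2) * (r * sin θ))
        = r ^ 2 * (cos θ * sin (θ + arcsin ρ)) := by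
      rw [sin_add, sin_arcsin hρ.1 hρ.2, cos_arcsin]
      ring
    rw [h, Real.sign_mul_of_pos (pow_pos hr 2)]
  rw [integral_gaussianReal_prod_of_forall_polar hv hpolar,
    integral_sign_cos_mul_sin_add (neg_pi_div_two_le_arcsin ρ) (arcsin_le_pi_div_two ρ)]
  field_simp
  ring

lemma ProbabilityTheory.gaussianReal_sub_gaussianReal_of_indepFun {Ω : Type*}
    {mΩ : MeasurableSpace Ω} {P : Measure Ω} {m₁ m₂ : ℝ} {v₁ v₂ : ℝ≥0} {X Y : Ω → ℝ}
    (hXY : IndepFun X Y P) (hX : P.map X = gaussianReal m₁ v₁)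
    (hY : P.map Y = gaussianReal m₂ v₂) :
    P.map (X - Y) = gaussianReal (m₁ - m₂) (v₁ + v₂) := by
  have hY' : HasLaw Y (gaussianReal m₂ v₂) P :=
    ⟨AEMeasurable.of_map_ne_zero (by simp [hY, NeZero.ne]), hY⟩
  have hXY' : IndepFun X (-Y) P := hXY.comp measurable_id measurable_neg
  rw [sub_eq_add_neg, sub_eq_add_neg,
    gaussianReal_add_gaussianReal_of_indepFun hXY' hX (gaussianReal_neg hY').map_eq]

theorem stmt4_general {Ω : Type*} [MeasurableSpace Ω] (μ : Measure Ω)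
    (W : Fin 4 → Ω → ℝ) (hmeas : ∀ i, Measurable (W i))
    (hindep : iIndepFun W μ)
    (hlaw : ∀ i, μ.map (W i) = gaussianReal 0 1)
    (ρ : ℝ) (hρ : ρ ∈ Set.Icc (-1 : ℝ) 1) :
    ∫ ω, Real.sign ((W 0 ω - W 2 ω) *
        ((ρ * W 0 ω + Real.sqrt (1 - ρ ^ 2) * W 1 ω)
          - (ρ * W 2 ω + Real.sqrt (1 - ρ ^ 2) * W 3 ω))) ∂μ
      = (2 / Real.pi) * Real.arcsin ρ := by
  have : IsProbabilityMeasure (μ.map (W 0)) := hlaw 0 ▸ inferInstance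
  have : IsProbabilityMeasure μ := Measure.isProbabilityMeasure_of_map (W 0)
  set U := W 0 - W 2
  set V := W 1 - W 3
  have hlawU : μ.map U = gaussianReal 0 2 := by
    simpa [one_add_one_eq_two] using gaussianReal_sub_gaussianReal_of_indepFun
      (hindep.indepFun (by decide : (0 : Fin 4) ≠ 2)) (hlaw 0) (hlaw 2)
  have hlawV : μ.map V = gaussianReal 0 2 := by
    simpa [one_add_one_eq_two] using gaussianReal_sub_gaussianReal_of_indepFun
      (hindep.indepFun (by decide : (1 : Fin 4) ≠ 3)) (hlaw 1) (hlaw 3)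
  have hUV : IndepFun U V μ :=
    (hindep.indepFun_prodMk_prodMk hmeas 0 2 1 3 (by decide) (by decide) (by decide)
      (by decide)).comp (measurable_fst.sub measurable_snd) (measurable_fst.sub measurable_snd)
  have hlawUV : μ.map (fun ω => (U ω, V ω)) = (gaussianReal 0 2).prod (gaussianReal 0 2) := by
    rw [(indepFun_iff_map_prod_eq_prod_map_map (by fun_prop) (by fun_prop)).mp hUV, hlawU, hlawV]
  calc _ = ∫ ω, Real.sign (U ω * (ρ * U ω + √(1 - ρ ^ 2) * V ω)) ∂μ := by
        congr! 3 with ω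
        simp only [U, V, Pi.sub_apply]
        ring
    _ = ∫ p, Real.sign (p.1 * (ρ * p.1 + √(1 - ρ ^ 2) * p.2))
          ∂(gaussianReal 0 2).prod (gaussianReal 0 2) := by
        have hf : Measurable fun p : ℝ × ℝ => Real.sign (p.1 * (ρ * p.1 + √(1 - ρ ^ 2) * p.2)) :=
          Real.measurable_sign.comp (by fun_prop)
        rw [← hlawUV, integral_map (by fun_prop) hf.aestronglyMeasurable]
    _ = 2 / π * arcsin ρ := integral_sign_mul_gaussianReal_prod two_ne_zero hρ

/-- Kendall's tau of a bivariate Gaussian with correlation `ρ` is `(2/π) arcsin ρ`.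
The bivariate Gaussian pair `(Z₁, Z₂)` with standard normal marginals and correlation `ρ` is
realized as `Z₁ = W₀`, `Z₂ = ρ W₀ + √(1−ρ²) W₁`, and an independent copy `(Z₁', Z₂')` via
`(W₂, W₃)`, where `W₀, W₁, W₂, W₃` are i.i.d. standard normal. -/
theorem stmt4 {Ω : Type*} [MeasurableSpace Ω] (μ : Measure Ω) [IsProbabilityMeasure μ]
    (W : Fin 4 → Ω → ℝ) (hmeas : ∀ i, Measurable (W i))
    (hindep : iIndepFun W μ)
    (hlaw : ∀ i, μ.map (W i) = gaussianReal 0 1)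
    (ρ : ℝ) (hρ : ρ ∈ Set.Icc (-1 : ℝ) 1) :
    ∫ ω, Real.sign ((W 0 ω - W 2 ω) *
        ((ρ * W 0 ω + Real.sqrt (1 - ρ ^ 2) * W 1 ω)
          - (ρ * W 2 ω + Real.sqrt (1 - ρ ^ 2) * W 3 ω))) ∂μ
      = (2 / Real.pi) * Real.arcsin ρ :=
  stmt4_general μ W hmeas hindep hlaw ρ hρ
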